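/- If q = 1/f satisfies the functional equation q(x)q(x+y) + q(−x)q(y) + q(−x−y)q(−y) = C with f(x) = x + Σ fₖ x^{k+1}/(k+1)!, then f₄ = 15f₁⁴ − 25f₁²f₂ + 7f₁f₃ + 4f₂². -/

import Mathlib

noncomputable def sub2 (f : PowerSeries ℚ) (s t : ℚ) : MvPowerSeries (Fin 2) ℚ :=
  fun d => (PowerSeries.coeff (R := ℚ) (d 0 + d 1) f) * ((d 0 + d 1).choose (d 0)) * s ^ (d 0) * t ^ (d 1)

/-- `1 / f(s·x + t·y)` as an element of the field of fractions of `ℚ⟦x, y⟧`. -/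
noncomputable def qv (f : PowerSeries ℚ) (s t : ℚ) : FractionRing (MvPowerSeries (Fin 2) ℚ) :=
  (algebraMap (MvPowerSeries (Fin 2) ℚ) (FractionRing (MvPowerSeries (Fin 2) ℚ)) (sub2 f s t))⁻¹

/-- The two-variable functional equation
`q(x)q(x+y) + q(-x)q(y) + q(-x-y)q(-y) = C` for `q = 1/f`. -/
def TwoVarEq (f : PowerSeries ℚ) (C : ℚ) : Prop :=
  qv f 1 0 * qv f 1 1 + qv f (-1) 0 * qv f 0 1 + qv f (-1) (-1) * qv f 0 (-1)
    = (C : FractionRing (MvPowerSeries (Fin 2) ℚ))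

/-!
Put `y = x`. The functional equation becomes `q(x)q(2x) + q(-x)q(x) + q(-2x)q(-x) = C`, and after
multiplying by `f(x)f(2x)f(-x)f(-2x)` an identity of power series in one variable. Its odd
coefficients vanish identically; the coefficient of `x⁴` determines `C = 6a₂² - 3a₃` (with
`aₖ` the coefficients of `f`) and the coefficient of `x⁶` then expresses `a₅` through `a₂, a₃, a₄`,
which is the claimed relation.
-/

open PowerSeries Finset

section General

variable {R : Type*} [CommRing R]

lemma eq_single_add_single_iff (d : Fin 2 →₀ ℕ) (i j : ℕ) :
    d = Finsupp.single 0 i + Finsupp.single 1 j ↔ (d 0, d 1) = (i, j) := by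
  simp [Finsupp.ext_iff, Fin.forall_fin_two]

lemma coeff_smul_X_add_smul_X_pow (s t : R) (d : Fin 2 →₀ ℕ) (n : ℕ) :
    MvPowerSeries.coeff d
        ((s • MvPowerSeries.X 0 + t • MvPowerSeries.X 1 : MvPowerSeries (Fin 2) R) ^ n)
      = if d 0 + d 1 = n then ((d 0 + d 1).choose (d 0) : R) * s ^ d 0 * t ^ d 1 else 0 := by
  have hterm (p : ℕ × ℕ) : MvPowerSeries.coeff d (n.choose p.1 •
      ((s • MvPowerSeries.X 0 : MvPowerSeries (Fin 2) R) ^ p.1 * (t • MvPowerSeries.X 1) ^ p.2))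
      = if (d 0, d 1) = p then (n.choose p.1 : R) * s ^ p.1 * t ^ p.2 else 0 := by
    rw [smul_pow, smul_pow, MvPowerSeries.X_pow_eq, MvPowerSeries.X_pow_eq, smul_mul_smul_comm,
      MvPowerSeries.monomial_mul_monomial, mul_one, map_nsmul, MvPowerSeries.coeff_smul,
      MvPowerSeries.coeff_monomial]
    simp only [eq_single_add_single_iff, nsmul_eq_mul]
    split_ifs <;> ring
  rw [(Commute.all _ _).add_pow', map_sum, sum_congr rfl fun p _ => hterm p, sum_ite_eq]
  simp only [HasAntidiagonal.mem_antidiagonal]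
  split_ifs with h
  · rw [h]
  · rfl

lemma hasSubst_smul_X_add_smul_X (s t : R) :
    HasSubst (s • MvPowerSeries.X 0 + t • MvPowerSeries.X 1 : MvPowerSeries (Fin 2) R) :=
  HasSubst.of_constantCoeff_zero (by simp)

lemma hasSubst_diagonal : MvPowerSeries.HasSubst (fun _ : Fin 2 => (X : R⟦X⟧)) :=
  MvPowerSeries.hasSubst_of_constantCoeff_zero fun _ => constantCoeff_X

noncomputable def diagonal : MvPowerSeries (Fin 2) R →ₐ[R] R⟦X⟧ :=
  MvPowerSeries.substAlgHom hasSubst_diagonal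

lemma diagonal_subst (f : R⟦X⟧) (s t : R) :
    diagonal (f.subst (s • MvPowerSeries.X 0 + t • MvPowerSeries.X 1 : MvPowerSeries (Fin 2) R))
      = rescale (s + t) f := by
  rw [diagonal, MvPowerSeries.substAlgHom_apply, subst_def,
    MvPowerSeries.subst_comp_subst_apply (hasSubst_smul_X_add_smul_X s t).const hasSubst_diagonal,
    rescale_eq_subst, subst_def]
  congr 2
  ext
  rw [MvPowerSeries.subst_add hasSubst_diagonal, MvPowerSeries.subst_smul hasSubst_diagonal,
    MvPowerSeries.subst_smul hasSubst_diagonal, MvPowerSeries.subst_X hasSubst_diagonal,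
    MvPowerSeries.subst_X hasSubst_diagonal, add_smul]

lemma rescale_ne_zero {f : R⟦X⟧} (h1 : coeff 1 f = 1) {a : R} (ha : a ≠ 0) : rescale a f ≠ 0 :=
  fun h => ha (by simpa [coeff_rescale, h1] using congrArg (coeff 1) h)

lemma coeff_mul_rescale_self (f : R⟦X⟧) (a : R) (n : ℕ) :
    coeff n (f * rescale a f) = ∑ p ∈ antidiagonal n, a ^ p.2 * coeff p.1 f * coeff p.2 f := by
  simp only [coeff_mul, coeff_rescale]
  exact sum_congr rfl fun p _ => by ring

/-- `q(x)q(2x) + q(-x)q(x) + q(-2x)q(-x) = c` for `q = 1/f`, multiplied by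
`f(x)f(2x) · f(-x)f(-2x)`. -/
def DiagonalEq (f : R⟦X⟧) (c : R) : Prop :=
  rescale (-1) (f * rescale 2 f) + rescale 2 (f * rescale (-1) f) + f * rescale 2 f
    = C c * (f * rescale 2 f * rescale (-1) (f * rescale 2 f))

variable {f : R⟦X⟧} {c : R}

lemma DiagonalEq.coeff_four (h : DiagonalEq f c) (h0 : constantCoeff f = 0)
    (h1 : coeff 1 f = 1) : 4 * c = 24 * coeff 2 f ^ 2 - 12 * coeff 3 f := by
  have e := congrArg (coeff 4) h
  simp only [map_add, coeff_C_mul, coeff_rescale, coeff_mul_rescale_self,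
    Nat.sum_antidiagonal_succ, Nat.antidiagonal_zero, sum_singleton, zero_add, Nat.reduceAdd,
    coeff_zero_eq_constantCoeff_apply, h0, h1] at e
  linear_combination -e

lemma DiagonalEq.coeff_six (h : DiagonalEq f c) (h0 : constantCoeff f = 0)
    (h1 : coeff 1 f = 1) : c * (40 * coeff 3 f - 20 * coeff 2 f ^ 2)
      = -60 * coeff 5 f + 168 * coeff 2 f * coeff 4 f - 48 * coeff 3 f ^ 2 := by
  have e := congrArg (coeff 6) h
  simp only [map_add, coeff_C_mul, coeff_rescale, coeff_mul_rescale_self,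
    Nat.sum_antidiagonal_succ, Nat.antidiagonal_zero, sum_singleton, zero_add, Nat.reduceAdd,
    coeff_zero_eq_constantCoeff_apply, h0, h1] at e
  linear_combination -e

end General

lemma add_add_eq_mul_of_inv_mul_inv_add_add {K : Type*} [Field K] {a b c d e g k : K}
    (ha : a ≠ 0) (hb : b ≠ 0) (hc : c ≠ 0) (hd : d ≠ 0) (he : e ≠ 0) (hg : g ≠ 0)
    (h : a⁻¹ * b⁻¹ + c⁻¹ * d⁻¹ + e⁻¹ * g⁻¹ = k) :
    c * d * (e * g) + a * b * (e * g) + a * b * (c * d) = k * (a * b * (c * d) * (e * g)) := by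
  field_simp at h
  linear_combination h

lemma sub2_eq_subst (f : ℚ⟦X⟧) (s t : ℚ) :
    sub2 f s t
      = f.subst (s • MvPowerSeries.X 0 + t • MvPowerSeries.X 1 : MvPowerSeries (Fin 2) ℚ) := by
  ext d
  rw [coeff_subst (hasSubst_smul_X_add_smul_X s t), finsum_eq_single _ (d 0 + d 1)]
  · rw [smul_eq_mul, coeff_smul_X_add_smul_X_pow, if_pos rfl, MvPowerSeries.coeff_apply, sub2]
    ring
  · intro n hn
    simp [coeff_smul_X_add_smul_X_pow, Ne.symm hn]

lemma diagonal_sub2 (f : ℚ⟦X⟧) (s t : ℚ) : diagonal (sub2 f s t) = rescale (s + t) f := by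
  rw [sub2_eq_subst, diagonal_subst]

lemma sub2_ne_zero {f : ℚ⟦X⟧} (h1 : coeff 1 f = 1) {s t : ℚ} (hst : s + t ≠ 0) :
    sub2 f s t ≠ 0 :=
  fun h => rescale_ne_zero h1 hst (by rw [← diagonal_sub2, h, map_zero])

section TwoVarEq

variable {f : ℚ⟦X⟧} {c : ℚ}

-- `y ↦ x` is defined on `ℚ⟦x, y⟧` but not on its fraction field, so denominators go first.
lemma TwoVarEq.clear_denominators (h1 : coeff 1 f = 1) (heq : TwoVarEq f c) :
    sub2 f (-1) 0 * sub2 f 0 1 * (sub2 f (-1) (-1) * sub2 f 0 (-1))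
      + sub2 f 1 0 * sub2 f 1 1 * (sub2 f (-1) (-1) * sub2 f 0 (-1))
      + sub2 f 1 0 * sub2 f 1 1 * (sub2 f (-1) 0 * sub2 f 0 1)
      = c • (sub2 f 1 0 * sub2 f 1 1 * (sub2 f (-1) 0 * sub2 f 0 1)
          * (sub2 f (-1) (-1) * sub2 f 0 (-1))) := by
  have hK (s t : ℚ) (hst : s + t ≠ 0) := IsFractionRing.to_map_ne_zero_of_mem_nonZeroDivisors
    (K := FractionRing (MvPowerSeries (Fin 2) ℚ))
    (mem_nonZeroDivisors_of_ne_zero (sub2_ne_zero h1 hst))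
  apply IsFractionRing.injective (MvPowerSeries (Fin 2) ℚ) (FractionRing (MvPowerSeries (Fin 2) ℚ))
  simp only [map_add, map_mul, map_rat_smul]
  rw [Algebra.smul_def, eq_ratCast]
  exact add_add_eq_mul_of_inv_mul_inv_add_add (hK 1 0 (by norm_num)) (hK 1 1 (by norm_num))
    (hK (-1) 0 (by norm_num)) (hK 0 1 (by norm_num)) (hK (-1) (-1) (by norm_num))
    (hK 0 (-1) (by norm_num)) heq

lemma TwoVarEq.diagonalEq (h1 : coeff 1 f = 1) (heq : TwoVarEq f c) : DiagonalEq f c := by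
  have hE := congrArg diagonal (heq.clear_denominators h1)
  simp only [map_add, map_mul, map_smul, diagonal_sub2] at hE
  norm_num [rescale_one, smul_eq_C_mul] at hE
  have hf : f * rescale (-1) f ≠ 0 :=
    mul_ne_zero (fun h => by simp [h] at h1) (rescale_ne_zero h1 (by norm_num))
  rw [DiagonalEq, map_mul, map_mul, rescale_rescale, rescale_rescale]
  norm_num
  apply mul_left_cancel₀ hf
  linear_combination hE

end TwoVarEq

/-- The relation on `f₄` forced by the functional equation. -/
theorem stmt_5 (f : PowerSeries ℚ) (C : ℚ) (fc : ℕ → ℚ)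
    (h0 : PowerSeries.constantCoeff (R := ℚ) f = 0) (h1 : PowerSeries.coeff (R := ℚ) 1 f = 1)
    (hfc : ∀ k, 1 ≤ k → PowerSeries.coeff (R := ℚ) (k + 1) f = fc k / ((k + 1).factorial : ℚ))
    (heq : TwoVarEq f C) :
    fc 4 = 15 * (fc 1) ^ 4 - 25 * (fc 1) ^ 2 * fc 2 + 7 * fc 1 * fc 3 + 4 * (fc 2) ^ 2 := by
  have hdiag := heq.diagonalEq h1
  have h4 := hdiag.coeff_four h0 h1
  have h6 := hdiag.coeff_six h0 h1
  obtain ⟨a2, a3, a4, a5⟩ : coeff 2 f = fc 1 / 2 ∧ coeff 3 f = fc 2 / 6 ∧ coeff 4 f = fc 3 / 24 ∧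
      coeff 5 f = fc 4 / 120 :=
    ⟨by simpa [Nat.factorial] using hfc 1 le_rfl,
      by simpa [Nat.factorial] using hfc 2 (by norm_num),
      by simpa [Nat.factorial] using hfc 3 (by norm_num),
      by simpa [Nat.factorial] using hfc 4 (by norm_num)⟩
  rw [a2, a3] at h4
  rw [a2, a3, a4, a5] at h6
  linear_combination 2 * h6 - (20 * (fc 2 / 6) - 10 * (fc 1 / 2) ^ 2) * h4
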